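/- arXiv:2304.02244 — 2 statements merged into one kernel-verified Lean document; each statement's English description precedes it below -/
import Mathlib

section
/- Let G be a group with positive cone P. Let (G_n)_{n ∈ ℤ} and (A_n)_{n ∈ ℤ} be families of subgroups of G such that A_n ⊆ G_n and A_n ⊆ G_{n+1} for all n ∈ ℤ. For each m ≥ 0 let G_(m) be the subgroup of G generated by the union of the G_j for |j| ≤ m, and set P_(m) := P ∩ G_(m); assume that the union of the G_(m) over all m ≥ 0 is G. Assume that P is not Conradian (there exist a, b ∈ P such that a⁻¹ · b · aⁿ ∉ P for every positive integer n) and that P has no minimal positive element (for every p ∈ P there exists q ∈ P with q ≠ p and q⁻¹p ∈ P). Assume further: (D) for every m ≥ 0 there exists p̃_m ∈ P_(m) such that every q ∈ P_(m) satisfies q = p̃_m or p̃_m⁻¹ · q ∈ P; (C1) for every n ∈ ℤ there exists m ≥ 0 with G_n ∪ G_{n+1} ⊆ G_(m) such that every subgroup of G_(m) convex with respect to P_(m) that contains A_n also contains G_{n+1}; (C2) for every n ∈ ℤ there exists m ≥ 0 with G_n ∪ G_{n+1} ⊆ G_(m) such that every subgroup of G_(m) convex with respect to P_(m) that contains A_n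 also contains G_n; (C3) for every m ≥ 0 there exists an integer ℓ ≥ m such that every subgroup of G_(ℓ) convex with respect to P_(ℓ) that contains p̃_m also contains A_ℓ. Then P is approximated by its conjugates: for every finite subset S ⊆ P there exists g ∈ G such that g·s·g⁻¹ ∈ P for all s ∈ S and g⁻¹Pg ≠ P. In particular P is not isolated: for every finite subset S ⊆ P there exists a positive cone Q of G with Q ≠ P and S ⊆ Q. -/
/-- `P` is a positive cone of the group `G`: it is closed under multiplication and
`G` is the disjoint union of `P`, `P⁻¹` and `{1}`. -/
def IsPositiveCone {G : Type*} [Group G] (P : Set G) : Prop :=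
  (∀ a ∈ P, ∀ b ∈ P, a * b ∈ P) ∧
  (∀ g : G, g ∈ P ∨ g⁻¹ ∈ P ∨ g = 1) ∧
  (∀ g ∈ P, g⁻¹ ∉ P) ∧ (1 : G) ∉ P

/-- A subgroup `C` of `G` is convex with respect to `P` if whenever `c₁, c₂ ∈ C`
and `g ∈ G` satisfy `c₁⁻¹ * g ∈ P ∪ {1}` and `g⁻¹ * c₂ ∈ P ∪ {1}`, then `g ∈ C`. -/
def IsConvex {G : Type*} [Group G] (P : Set G) (C : Subgroup G) : Prop :=
  ∀ c₁ ∈ C, ∀ c₂ ∈ C, ∀ g : G,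
    c₁⁻¹ * g ∈ P ∪ {1} → g⁻¹ * c₂ ∈ P ∪ {1} → g ∈ C

/-- `C` is a subgroup of `H` which is convex with respect to the set `Q`
(a positive cone of `H`): whenever `c₁, c₂ ∈ C` and `g ∈ H` satisfy
`c₁⁻¹ * g ∈ Q ∪ {1}` and `g⁻¹ * c₂ ∈ Q ∪ {1}`, then `g ∈ C`. -/
def IsConvexIn {G : Type*} [Group G] (H : Subgroup G) (Q : Set G) (C : Subgroup G) : Prop :=
  C ≤ H ∧ ∀ c₁ ∈ C, ∀ c₂ ∈ C, ∀ g ∈ H,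
    c₁⁻¹ * g ∈ Q ∪ {1} → g⁻¹ * c₂ ∈ Q ∪ {1} → g ∈ C


/-!
Write `x < y` for `x⁻¹ y ∈ P` and let `a, b ∈ P` witness that `P` is not Conradian. Given finitely
many positive elements, choose `m` such that they and `a` lie in `G_(m)`, and conjugate by the least
element `p = p̃_m` of `P_(m)`: as `p` is least, `p s p⁻¹` stays positive for every positive
`s ∈ G_(m)`. If conjugation by `p` preserved `P`, the elements lying strictly between `p⁻ⁿ` and `pⁿ`
for some `n` would form a convex subgroup of `G` containing `p`. By (C3) it contains some `A_ℓ`, by (C1)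
and (C2) it then spreads along the chain of the `G_n`, so it is all of `G`. Hence `a < pⁿ` for some
`n`, while `p ≤ a` gives `pⁿ ≤ aⁿ`, so `a⁻¹ b aⁿ = (a⁻¹ pⁿ)(p⁻ⁿ b pⁿ)(p⁻ⁿ aⁿ)` would be positive.
-/

open Subgroup

section Conjugation

variable {G : Type*} [Group G]

theorem image_conj_eq_preimage (P : Set G) (g : G) :
    (fun x => g⁻¹ * x * g) '' P = MulAut.conj g ⁻¹' P := by
  ext x
  constructor
  · rintro ⟨y, hy, rfl⟩
    simpa [mul_assoc] using hy
  · intro hx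
    exact ⟨g * x * g⁻¹, hx, by group⟩

theorem mem_normalizer_of_image_conj_eq {P : Set G} {g : G}
    (h : (fun x => g⁻¹ * x * g) '' P = P) : g ∈ normalizer P := by
  rw [image_conj_eq_preimage] at h
  exact fun x => (Set.ext_iff.mp h x).symm

end Conjugation

namespace IsPositiveCone

variable {G : Type*} [Group G] {P : Set G} {a b p s : G}

theorem mul_mem (hP : IsPositiveCone P) (ha : a ∈ P) (hb : b ∈ P) : a * b ∈ P :=
  hP.1 a ha b hb

theorem inv_notMem (hP : IsPositiveCone P) (ha : a ∈ P) : a⁻¹ ∉ P :=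
  hP.2.2.1 a ha

theorem one_notMem (hP : IsPositiveCone P) : (1 : G) ∉ P :=
  hP.2.2.2

theorem inv_mem_of_notMem (hP : IsPositiveCone P) (ha : a ∉ P) (ha1 : a ≠ 1) : a⁻¹ ∈ P :=
  (hP.2.1 a).resolve_left ha |>.resolve_right ha1

theorem mul_mem_of_mem_of_mem_union_one (hP : IsPositiveCone P) (ha : a ∈ P)
    (hb : b ∈ P ∪ {1}) : a * b ∈ P := by
  rcases hb with hb | rfl
  · exact hP.mul_mem ha hb
  · rwa [mul_one]

theorem mul_mem_of_mem_union_one_of_mem (hP : IsPositiveCone P) (ha : a ∈ P ∪ {1})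
    (hb : b ∈ P) : a * b ∈ P := by
  rcases ha with ha | rfl
  · exact hP.mul_mem ha hb
  · rwa [one_mul]

theorem mul_mem_union_one (hP : IsPositiveCone P) (ha : a ∈ P ∪ {1}) (hb : b ∈ P ∪ {1}) :
    a * b ∈ P ∪ {1} := by
  rcases hb with hb | rfl
  · exact .inl (hP.mul_mem_of_mem_union_one_of_mem ha hb)
  · rwa [mul_one]

theorem pow_mem_union_one (hP : IsPositiveCone P) (ha : a ∈ P ∪ {1}) (n : ℕ) :
    a ^ n ∈ P ∪ {1} := by
  induction n with
  | zero => exact .inr (pow_zero a)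
  | succ n ih => rw [pow_succ]; exact hP.mul_mem_union_one ih ha

theorem preimage {H F : Type*} [Group H] [FunLike F H G] [MonoidHomClass F H G]
    (hP : IsPositiveCone P) {f : F} (hf : Function.Injective f) :
    IsPositiveCone (f ⁻¹' P) := by
  refine ⟨fun x hx y hy => ?_, fun x => ?_, fun x hx hx' => ?_, ?_⟩
  · simpa only [Set.mem_preimage, map_mul] using hP.mul_mem hx hy
  · rcases hP.2.1 (f x) with h | h | h
    · exact .inl h
    · exact .inr (.inl (by rwa [Set.mem_preimage, map_inv]))
    · exact .inr (.inr (hf (by rw [h, map_one])))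
  · exact hP.inv_notMem hx (by rwa [Set.mem_preimage, map_inv] at hx')
  · simpa only [Set.mem_preimage, map_one] using hP.one_notMem

theorem image_conj (hP : IsPositiveCone P) (g : G) :
    IsPositiveCone ((fun x => g⁻¹ * x * g) '' P) := by
  rw [image_conj_eq_preimage]
  exact hP.preimage (MulAut.conj g).injective

theorem conj_mem_of_forall_inv_mul_mem {H : Subgroup G} (hP : IsPositiveCone P) (hp : p ∈ P)
    (hpH : p ∈ H) (hmin : ∀ q ∈ P ∩ H, p⁻¹ * q ∈ P ∪ {1}) (hs : s ∈ P ∩ H) :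
    p * s * p⁻¹ ∈ P := by
  by_contra hps
  have hps1 : p * s * p⁻¹ ≠ 1 := fun h => hP.one_notMem (conj_eq_one_iff.mp h ▸ hs.1)
  have hq : (p * s * p⁻¹)⁻¹ ∈ P ∩ H :=
    ⟨hP.inv_mem_of_notMem hps hps1, H.inv_mem (H.mul_mem (H.mul_mem hpH hs.2) (H.inv_mem hpH))⟩
  have hle : s⁻¹ * p⁻¹ ∈ P ∪ {1} := by simpa [mul_assoc] using hmin _ hq
  exact hP.inv_notMem hp (by simpa using hP.mul_mem_of_mem_of_mem_union_one hs.1 hle)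

end IsPositiveCone

section Normalizer

variable {G : Type*} [Group G] {P : Set G} {p : G}

theorem IsPositiveCone.inv_pow_mul_pow_mem_union_one (hP : IsPositiveCone P)
    (hpN : p ∈ normalizer P) {a : G} (hpa : p⁻¹ * a ∈ P ∪ {1}) (n : ℕ) :
    (p ^ n)⁻¹ * a ^ n ∈ P ∪ {1} := by
  induction n with
  | zero => exact .inr (by simp)
  | succ n ih =>
    have hconj : p⁻¹ * ((p ^ n)⁻¹ * a ^ n) * p ∈ P ∪ {1} := by
      rcases ih with h | h
      · exact .inl ((mem_set_normalizer_iff''.mp hpN _).mp h)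
      · exact .inr (by simp [Set.mem_singleton_iff.mp h])
    convert hP.mul_mem_union_one hconj hpa using 1
    group

def boundedByPowers (hP : IsPositiveCone P) (hp : p ∈ P) (hpN : p ∈ normalizer P) :
    Subgroup G where
  carrier := {g | ∃ n : ℕ, g⁻¹ * p ^ n ∈ P ∧ p ^ n * g ∈ P}
  one_mem' := ⟨1, by simpa using hp, by simpa using hp⟩
  mul_mem' := by
    rintro g h ⟨n, hgn, hng⟩ ⟨k, hhk, hkh⟩
    have hpk := pow_mem hpN k
    refine ⟨n + k, ?_, ?_⟩
    · convert hP.mul_mem hhk ((mem_set_normalizer_iff''.mp hpk _).mp hgn) using 1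
      group
    · convert hP.mul_mem ((mem_set_normalizer_iff.mp hpk _).mp hng) hkh using 1
      group
  inv_mem' := by
    rintro g ⟨n, hgn, hng⟩
    have hpn := pow_mem hpN n
    refine ⟨n, ?_, ?_⟩
    · convert (mem_set_normalizer_iff''.mp hpn _).mp hng using 1
      group
    · convert (mem_set_normalizer_iff.mp hpn _).mp hgn using 1
      group

variable {hP : IsPositiveCone P} {hp : p ∈ P} {hpN : p ∈ normalizer P}

theorem self_mem_boundedByPowers : p ∈ boundedByPowers hP hp hpN :=
  ⟨2, by simpa [pow_two] using hp, by simpa only [pow_two] using hP.mul_mem (hP.mul_mem hp hp) hp⟩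

theorem isConvex_boundedByPowers : IsConvex P (boundedByPowers hP hp hpN) := by
  rintro c₁ ⟨n₁, -, hc₁⟩ c₂ ⟨n₂, hc₂, -⟩ g hg₁ hg₂
  have hpow (n : ℕ) := hP.pow_mem_union_one (.inl hp) n
  refine ⟨n₂ + n₁, ?_, ?_⟩
  · convert hP.mul_mem_of_mem_of_mem_union_one
      (hP.mul_mem_of_mem_union_one_of_mem hg₂ hc₂) (hpow n₁) using 1
    group
  · convert hP.mul_mem_of_mem_union_one_of_mem (hpow n₂)
      (hP.mul_mem_of_mem_of_mem_union_one hc₁ hg₁) using 1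
    group

theorem exists_inv_mul_mul_pow_mem_of_mem_boundedByPowers {a b : G} (ha : a ∈ P)
    (hpa : p⁻¹ * a ∈ P ∪ {1}) (haB : a ∈ boundedByPowers hP hp hpN) (hb : b ∈ P) :
    ∃ n : ℕ, 0 < n ∧ a⁻¹ * b * a ^ n ∈ P := by
  obtain ⟨n, han, -⟩ := haB
  refine ⟨n, Nat.pos_of_ne_zero fun hn => hP.inv_notMem ha (by simpa [hn] using han), ?_⟩
  have hb' := (mem_set_normalizer_iff''.mp (pow_mem hpN n) b).mp hb
  convert hP.mul_mem_of_mem_of_mem_union_one (hP.mul_mem han hb')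
    (hP.inv_pow_mul_pow_mem_union_one hpN hpa n) using 1
  group

end Normalizer

theorem le_of_overlapping_chain {α : Type*} [Preorder α] {A B : ℤ → α} {c : α}
    (hAB : ∀ n, A n ≤ B n) (hAB' : ∀ n, A n ≤ B (n + 1))
    (up : ∀ n, A n ≤ c → B (n + 1) ≤ c) (down : ∀ n, A n ≤ c → B n ≤ c)
    {ℓ : ℤ} (hℓ : A ℓ ≤ c) (n : ℤ) : B n ≤ c := by
  induction n using Int.inductionOn' (b := ℓ) with
  | zero => exact down ℓ hℓ
  | succ k _ ih => exact up k ((hAB k).trans ih)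
  | pred k _ ih => exact down _ ((hAB' (k - 1)).trans (by rwa [sub_add_cancel]))

section Convex

variable {G : Type*} [Group G] {P : Set G} {C : Subgroup G}

theorem IsConvex.isConvexIn_inf (hC : IsConvex P C) (H : Subgroup G) :
    IsConvexIn H (P ∩ H) (C ⊓ H) := by
  refine ⟨inf_le_right, fun c₁ hc₁ c₂ hc₂ g hg h₁ h₂ => ⟨?_, hg⟩⟩
  exact hC c₁ hc₁.1 c₂ hc₂.1 g (h₁.imp_left And.left) (h₂.imp_left And.left)

theorem IsConvex.le_of_forall_isConvexIn (hC : IsConvex P C) {H K L : Subgroup G}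
    (hKH : K ≤ H) (hKC : K ≤ C) (h : ∀ C', IsConvexIn H (P ∩ H) C' → K ≤ C' → L ≤ C') :
    L ≤ C :=
  (h _ (hC.isConvexIn_inf H) (le_inf hKC hKH)).trans inf_le_left

end Convex

section Exhaustion

variable {G : Type*} [Group G] {Gn : ℤ → Subgroup G} {GM : ℕ → Subgroup G}

theorem monotone_of_eq_closure
    (hGM : ∀ m : ℕ, GM m = closure (⋃ j ∈ {j : ℤ | |j| ≤ (m : ℤ)}, (Gn j : Set G))) :
    Monotone GM := by
  intro m m' hmm'
  rw [hGM m, hGM m']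
  refine closure_mono (Set.biUnion_mono (fun j (hj : |j| ≤ (m : ℤ)) => ?_) fun _ _ => le_rfl)
  exact hj.trans (by exact_mod_cast hmm')

theorem le_of_eq_closure
    (hGM : ∀ m : ℕ, GM m = closure (⋃ j ∈ {j : ℤ | |j| ≤ (m : ℤ)}, (Gn j : Set G)))
    {C : Subgroup G} (hC : ∀ j, Gn j ≤ C) (m : ℕ) : GM m ≤ C := by
  rw [hGM m, closure_le]
  exact Set.iUnion₂_subset fun j _ => hC j

theorem exists_forall_mem_of_monotone (hmono : Monotone GM) (hunion : ∀ x : G, ∃ m, x ∈ GM m)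
    (s : Finset G) : ∃ m, ∀ x ∈ s, x ∈ GM m := by
  choose f hf using hunion
  exact ⟨s.sup f, fun x hx => hmono (Finset.le_sup hx) (hf x)⟩

end Exhaustion

theorem eq_top_of_isConvex {G : Type*} [Group G] {P : Set G} {Gn An : ℤ → Subgroup G}
    (hAn : ∀ n : ℤ, An n ≤ Gn n) (hAn' : ∀ n : ℤ, An n ≤ Gn (n + 1)) {GM : ℕ → Subgroup G}
    (hGM : ∀ m : ℕ, GM m = closure (⋃ j ∈ {j : ℤ | |j| ≤ (m : ℤ)}, (Gn j : Set G)))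
    (hunion : ∀ x : G, ∃ m : ℕ, x ∈ GM m)
    (hC1 : ∀ n : ℤ, ∃ m : ℕ, Gn n ≤ GM m ∧ Gn (n + 1) ≤ GM m ∧
      ∀ C : Subgroup G, IsConvexIn (GM m) (P ∩ (GM m : Set G)) C →
        An n ≤ C → Gn (n + 1) ≤ C)
    (hC2 : ∀ n : ℤ, ∃ m : ℕ, Gn n ≤ GM m ∧ Gn (n + 1) ≤ GM m ∧
      ∀ C : Subgroup G, IsConvexIn (GM m) (P ∩ (GM m : Set G)) C →
        An n ≤ C → Gn n ≤ C)
    {p : G} {m : ℕ} (hpm : p ∈ GM m)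
    (hC3 : ∃ ℓ : ℕ, m ≤ ℓ ∧
      ∀ C : Subgroup G, IsConvexIn (GM ℓ) (P ∩ (GM ℓ : Set G)) C → p ∈ C → An (ℓ : ℤ) ≤ C)
    {C : Subgroup G} (hC : IsConvex P C) (hpC : p ∈ C) : C = ⊤ := by
  obtain ⟨ℓ, hmℓ, hℓ⟩ := hC3
  have hAℓ : An ℓ ≤ C :=
    hC.le_of_forall_isConvexIn (zpowers_le.mpr (monotone_of_eq_closure hGM hmℓ hpm))
      (zpowers_le.mpr hpC) fun C' hC' hpC' => hℓ C' hC' (zpowers_le.mp hpC')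
  have hGnC : ∀ n, Gn n ≤ C := by
    refine le_of_overlapping_chain hAn hAn' (fun n hAC => ?_) (fun n hAC => ?_) hAℓ
    · obtain ⟨k, hnk, -, hk⟩ := hC1 n
      exact hC.le_of_forall_isConvexIn ((hAn n).trans hnk) hAC hk
    · obtain ⟨k, hnk, -, hk⟩ := hC2 n
      exact hC.le_of_forall_isConvexIn ((hAn n).trans hnk) hAC hk
  refine eq_top_iff.mpr fun x _ => ?_
  obtain ⟨k, hx⟩ := hunion x
  exact le_of_eq_closure hGM hGnC k hx

theorem stmt6_general {G : Type*} [Group G] (P : Set G) (hP : IsPositiveCone P)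
    (Gn An : ℤ → Subgroup G)
    (hAn : ∀ n : ℤ, An n ≤ Gn n) (hAn' : ∀ n : ℤ, An n ≤ Gn (n + 1))
    (GM : ℕ → Subgroup G)
    (hGM : ∀ m : ℕ,
      GM m = Subgroup.closure (⋃ j ∈ {j : ℤ | |j| ≤ (m : ℤ)}, (Gn j : Set G)))
    (hunion : ∀ x : G, ∃ m : ℕ, x ∈ GM m)
    -- `P` is not Conradian
    (hnc : ∃ a ∈ P, ∃ b ∈ P, ∀ n : ℕ, 0 < n → a⁻¹ * b * a ^ n ∉ P)
    -- (D) : each `P_(m) = P ∩ G_(m)` is discrete with minimal positive element `pt m`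
    (pt : ℕ → G)
    (hD : ∀ m : ℕ, pt m ∈ P ∩ (GM m : Set G) ∧
      ∀ q ∈ P ∩ (GM m : Set G), q = pt m ∨ (pt m)⁻¹ * q ∈ P)
    -- (C1)
    (hC1 : ∀ n : ℤ, ∃ m : ℕ, Gn n ≤ GM m ∧ Gn (n + 1) ≤ GM m ∧
      ∀ C : Subgroup G, IsConvexIn (GM m) (P ∩ (GM m : Set G)) C →
        An n ≤ C → Gn (n + 1) ≤ C)
    -- (C2)
    (hC2 : ∀ n : ℤ, ∃ m : ℕ, Gn n ≤ GM m ∧ Gn (n + 1) ≤ GM m ∧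
      ∀ C : Subgroup G, IsConvexIn (GM m) (P ∩ (GM m : Set G)) C →
        An n ≤ C → Gn n ≤ C)
    -- (C3)
    (hC3 : ∀ m : ℕ, ∃ ℓ : ℕ, m ≤ ℓ ∧
      ∀ C : Subgroup G, IsConvexIn (GM ℓ) (P ∩ (GM ℓ : Set G)) C →
        pt m ∈ C → An (ℓ : ℤ) ≤ C) :
    -- `P` is approximated by its conjugates …
    (∀ S : Finset G, (S : Set G) ⊆ P → ∃ g : G,
      (∀ s ∈ S, g * s * g⁻¹ ∈ P) ∧ (fun x => g⁻¹ * x * g) '' P ≠ P) ∧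
    -- … in particular `P` is not isolated
    (∀ S : Finset G, (S : Set G) ⊆ P → ∃ Q : Set G,
      IsPositiveCone Q ∧ Q ≠ P ∧ (S : Set G) ⊆ Q) := by
  have approx (S : Finset G) (hS : (S : Set G) ⊆ P) : ∃ g : G,
      (∀ s ∈ S, g * s * g⁻¹ ∈ P) ∧ (fun x => g⁻¹ * x * g) '' P ≠ P := by
    classical
    obtain ⟨a, ha, b, hb, hab⟩ := hnc
    obtain ⟨m, hm⟩ :=
      exists_forall_mem_of_monotone (monotone_of_eq_closure hGM) hunion (insert a S)
    obtain ⟨⟨hpP, hpm⟩, hleast⟩ := hD m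
    have hmin : ∀ q ∈ P ∩ (GM m : Set G), (pt m)⁻¹ * q ∈ P ∪ {1} := fun q hq =>
      (hleast q hq).symm.imp_right fun h => by simp [h]
    refine ⟨pt m, fun s hs => hP.conj_mem_of_forall_inv_mul_mem hpP hpm hmin
      ⟨hS hs, hm s (Finset.mem_insert_of_mem hs)⟩, fun hconj => ?_⟩
    have hpN := mem_normalizer_of_image_conj_eq hconj
    have htop : boundedByPowers hP hpP hpN = ⊤ := eq_top_of_isConvex hAn hAn' hGM hunion
      hC1 hC2 hpm (hC3 m) isConvex_boundedByPowers self_mem_boundedByPowers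
    obtain ⟨n, hn, habn⟩ := exists_inv_mul_mul_pow_mem_of_mem_boundedByPowers ha
      (hmin a ⟨ha, hm a (Finset.mem_insert_self a S)⟩) (htop ▸ mem_top a) hb
    exact hab n hn habn
  refine ⟨approx, fun S hS => ?_⟩
  obtain ⟨g, hgS, hne⟩ := approx S hS
  refine ⟨_, hP.image_conj g, hne, fun s hs => ?_⟩
  rw [image_conj_eq_preimage]
  exact hgS s hs

theorem stmt6 {G : Type*} [Group G] (P : Set G) (hP : IsPositiveCone P)
    (Gn An : ℤ → Subgroup G)
    (hAn : ∀ n : ℤ, An n ≤ Gn n) (hAn' : ∀ n : ℤ, An n ≤ Gn (n + 1))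
    (GM : ℕ → Subgroup G)
    (hGM : ∀ m : ℕ,
      GM m = Subgroup.closure (⋃ j ∈ {j : ℤ | |j| ≤ (m : ℤ)}, (Gn j : Set G)))
    (hunion : ∀ x : G, ∃ m : ℕ, x ∈ GM m)
    -- `P` is not Conradian
    (hnc : ∃ a ∈ P, ∃ b ∈ P, ∀ n : ℕ, 0 < n → a⁻¹ * b * a ^ n ∉ P)
    -- `P` has no minimal positive element
    (hdense : ∀ p ∈ P, ∃ q ∈ P, q ≠ p ∧ q⁻¹ * p ∈ P)
    -- (D) : each `P_(m) = P ∩ G_(m)` is discrete with minimal positive element `pt m`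
    (pt : ℕ → G)
    (hD : ∀ m : ℕ, pt m ∈ P ∩ (GM m : Set G) ∧
      ∀ q ∈ P ∩ (GM m : Set G), q = pt m ∨ (pt m)⁻¹ * q ∈ P)
    -- (C1)
    (hC1 : ∀ n : ℤ, ∃ m : ℕ, Gn n ≤ GM m ∧ Gn (n + 1) ≤ GM m ∧
      ∀ C : Subgroup G, IsConvexIn (GM m) (P ∩ (GM m : Set G)) C →
        An n ≤ C → Gn (n + 1) ≤ C)
    -- (C2)
    (hC2 : ∀ n : ℤ, ∃ m : ℕ, Gn n ≤ GM m ∧ Gn (n + 1) ≤ GM m ∧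
      ∀ C : Subgroup G, IsConvexIn (GM m) (P ∩ (GM m : Set G)) C →
        An n ≤ C → Gn n ≤ C)
    -- (C3)
    (hC3 : ∀ m : ℕ, ∃ ℓ : ℕ, m ≤ ℓ ∧
      ∀ C : Subgroup G, IsConvexIn (GM ℓ) (P ∩ (GM ℓ : Set G)) C →
        pt m ∈ C → An (ℓ : ℤ) ≤ C) :
    -- `P` is approximated by its conjugates …
    (∀ S : Finset G, (S : Set G) ⊆ P → ∃ g : G,
      (∀ s ∈ S, g * s * g⁻¹ ∈ P) ∧ (fun x => g⁻¹ * x * g) '' P ≠ P) ∧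
    -- … in particular `P` is not isolated
    (∀ S : Finset G, (S : Set G) ⊆ P → ∃ Q : Set G,
      IsPositiveCone Q ∧ Q ≠ P ∧ (S : Set G) ⊆ Q) :=
  stmt6_general P hP Gn An hAn hAn' GM hGM hunion hnc pt hD hC1 hC2 hC3
end

section
/- In the setting of the Dehornoy-type inductive limit (functions k, l : ℤ → ℤ with k(n), l(n) ≥ 2, presented group G̃ with generators gₙ (n ∈ ℤ) and relations g_{n-1}^{k(n)} = g_n^{l(n)}, elements a_{i,m}, subsemigroup P̃, subgroups G_(m), and P_(m) := P̃ ∩ G_(m)): for every m ≥ 0, every subgroup C of G_(m+1) that is convex with respect to P_(m+1) and contains g_m^{k(m+1)} also contains g_m and g_{m+1}. -/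
/-- The relators `g_{n-1}^{k n} * g_n^{-(l n)}` of the Dehornoy-type inductive limit. -/
def dehornoyRels (k l : ℤ → ℤ) : Set (FreeGroup ℤ) :=
  {r | ∃ n : ℤ, r = FreeGroup.of (n - 1) ^ k n * FreeGroup.of n ^ (-(l n))}

/-- The presented group `G̃` with generators `gₙ (n : ℤ)` and relations
`g_{n-1}^{k n} = g_n^{l n}`. -/
abbrev Gtil (k l : ℤ → ℤ) : Type := PresentedGroup (dehornoyRels k l)

/-- The image `gₙ` in `G̃` of the `n`-th generator. -/
def gg (k l : ℤ → ℤ) (n : ℤ) : Gtil k l := PresentedGroup.of n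

/-- The element `a_{i,m} = g_{-m}^{-(k(-m+1)-1)} ⋯ g_{i-1}^{-(k i - 1)} * g_i` of `G̃`. -/
def aElt (k l : ℤ → ℤ) (i m : ℤ) : Gtil k l :=
  (((List.range (i + m).toNat).map
      (fun t => gg k l (-m + (t : ℤ)) ^ (-(k (-m + (t : ℤ) + 1) - 1)))).prod) * gg k l i

/-- The generating set `{a_{i,m} : m ≥ 0, -m ≤ i ≤ m}` of the positive cone. -/
def aGenSet (k l : ℤ → ℤ) : Set (Gtil k l) :=
  {x | ∃ m i : ℤ, 0 ≤ m ∧ -m ≤ i ∧ i ≤ m ∧ x = aElt k l i m}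

/-- The subsemigroup `P̃` of `G̃` generated by the `a_{i,m}`, viewed as a set. -/
def Ptil (k l : ℤ → ℤ) : Set (Gtil k l) :=
  (Subsemigroup.closure (aGenSet k l) : Subsemigroup (Gtil k l))

/-- The subgroup `G_(m)` of `G̃` generated by `g_{-m}, …, g_m`. -/
def Gsub (k l : ℤ → ℤ) (m : ℤ) : Subgroup (Gtil k l) :=
  Subgroup.closure {x | ∃ j : ℤ, -m ≤ j ∧ j ≤ m ∧ x = gg k l j}

/-!
Every generator `gₙ` is positive: `a_{-m,m} = g_{-m}` and `a_{i+1,m} = a_{i,m} g_i^{-k(i+1)} g_{i+1}`,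
so inductively `g_i a_{i,m}⁻¹ ∈ P̃ ∪ {1}` and `g_{i+1} = g_i^{k(i+1)-1} (g_i a_{i,m}⁻¹) a_{i+1,m} ∈ P̃`.
If `x` is positive then `1 ≤ x ≤ x^e` for `e ≥ 2`, so a convex subgroup containing `x^e` contains `x`.
Applied to `g_m^{k(m+1)}`, this gives `g_m ∈ C`; since `g_m^{k(m+1)} = g_{m+1}^{l(m+1)}`, it also
gives `g_{m+1} ∈ C`.
-/

namespace Subsemigroup

theorem mul_mem_of_mem_union_one {M : Type*} [MulOneClass M] (S : Subsemigroup M) {x y : M}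
    (hx : x ∈ S) (hy : y ∈ (S : Set M) ∪ {1}) : x * y ∈ S := by
  rcases hy with hy | rfl
  · exact S.mul_mem hx hy
  · rwa [mul_one]

theorem pow_succ_mem {M : Type*} [Monoid M] (S : Subsemigroup M) {x : M} (hx : x ∈ S)
    (n : ℕ) : x ^ (n + 1) ∈ S := by
  induction n with
  | zero => simpa using hx
  | succ n ih => rw [pow_succ]; exact S.mul_mem ih hx

theorem zpow_mem_of_pos {G : Type*} [Group G] (S : Subsemigroup G) {x : G} (hx : x ∈ S)
    {n : ℤ} (hn : 0 < n) : x ^ n ∈ S := by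
  obtain ⟨n, rfl⟩ : ∃ n' : ℕ, n = n' + 1 := ⟨(n - 1).toNat, by omega⟩
  exact_mod_cast S.pow_succ_mem hx n

end Subsemigroup

theorem IsConvexIn.mem_of_zpow_mem {G : Type*} [Group G] {H C : Subgroup G}
    {S : Subsemigroup G} (hC : IsConvexIn H ((S : Set G) ∩ H) C) {x : G} (hxS : x ∈ S)
    (hxH : x ∈ H) {e : ℤ} (he : 2 ≤ e) (hxe : x ^ e ∈ C) : x ∈ C := by
  refine hC.2 1 C.one_mem (x ^ e) hxe x hxH (Or.inl ?_) (Or.inl ?_)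
  · rw [inv_one, one_mul]
    exact ⟨hxS, hxH⟩
  · rw [← zpow_neg_one, ← zpow_add, neg_add_eq_sub]
    exact ⟨S.zpow_mem_of_pos hxS (by omega), H.zpow_mem hxH _⟩

section Dehornoy

variable (k l : ℤ → ℤ)

theorem gg_sub_one_zpow_eq (n : ℤ) : gg k l (n - 1) ^ k n = gg k l n ^ l n := by
  have h := PresentedGroup.one_of_mem (rels := dehornoyRels k l) ⟨n, rfl⟩
  rw [map_mul, map_zpow, map_zpow, zpow_neg] at h
  exact mul_inv_eq_one.mp h

theorem aElt_neg_self (m : ℤ) : aElt k l (-m) m = gg k l (-m) := by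
  unfold aElt
  simp

theorem aElt_add_one {i m : ℤ} (hi : -m ≤ i) :
    aElt k l (i + 1) m = aElt k l i m * gg k l i ^ (-k (i + 1)) * gg k l (i + 1) := by
  unfold aElt
  rw [show (i + 1 + m).toNat = (i + m).toNat + 1 by omega, List.range_succ]
  simp [show -m + max (i + m) 0 = i by omega]
  group

theorem aElt_mem_Ptil {i m : ℤ} (hm : 0 ≤ m) (h₁ : -m ≤ i) (h₂ : i ≤ m) :
    aElt k l i m ∈ Ptil k l :=
  Subsemigroup.subset_closure ⟨m, i, hm, h₁, h₂, rfl⟩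

theorem gg_mem_Ptil (hk : ∀ n : ℤ, 2 ≤ k n) (n : ℤ) : gg k l n ∈ Ptil k l := by
  set S := Subsemigroup.closure (aGenSet k l)
  set m := (n.natAbs : ℤ)
  suffices key : ∀ i ≥ -m, i ≤ m →
      gg k l i ∈ S ∧ gg k l i * (aElt k l i m)⁻¹ ∈ (S : Set (Gtil k l)) ∪ {1} from
    (key n (by omega) (by omega)).1
  refine Int.leInduction (fun _ => ?_) (fun i hi ih hi' => ?_)
  · have ha := aElt_mem_Ptil k l (i := -m) (by omega) le_rfl (by omega)
    rw [aElt_neg_self] at ha ⊢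
    exact ⟨ha, Or.inr (mul_inv_cancel _)⟩
  obtain ⟨hgi, hui⟩ := ih (by omega)
  have hu : gg k l (i + 1) * (aElt k l (i + 1) m)⁻¹ =
      gg k l i ^ (k (i + 1) - 1) * (gg k l i * (aElt k l i m)⁻¹) := by
    rw [aElt_add_one k l hi]
    group
  have hu' : gg k l (i + 1) * (aElt k l (i + 1) m)⁻¹ ∈ S := by
    rw [hu]
    exact S.mul_mem_of_mem_union_one (S.zpow_mem_of_pos hgi (by linarith [hk (i + 1)])) hui
  refine ⟨?_, Or.inl hu'⟩
  rw [← inv_mul_cancel_right (gg k l (i + 1)) (aElt k l (i + 1) m)]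
  exact S.mul_mem hu' (aElt_mem_Ptil k l (by omega) (by omega) hi')

theorem gg_mem_Gsub {j m : ℤ} (h₁ : -m ≤ j) (h₂ : j ≤ m) : gg k l j ∈ Gsub k l m :=
  Subgroup.subset_closure ⟨j, h₁, h₂, rfl⟩

end Dehornoy

theorem stmt18 (k l : ℤ → ℤ) (hk : ∀ n : ℤ, 2 ≤ k n) (hl : ∀ n : ℤ, 2 ≤ l n)
    (m : ℤ) (hm : 0 ≤ m) :
    ∀ C : Subgroup (Gtil k l),
      IsConvexIn (Gsub k l (m + 1)) (Ptil k l ∩ (Gsub k l (m + 1) : Set (Gtil k l))) C →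
      gg k l m ^ k (m + 1) ∈ C →
      gg k l m ∈ C ∧ gg k l (m + 1) ∈ C := by
  intro C hC hpow
  refine ⟨hC.mem_of_zpow_mem (gg_mem_Ptil k l hk m) (gg_mem_Gsub k l (by omega) (by omega))
    (hk (m + 1)) hpow, ?_⟩
  have hrel : gg k l m ^ k (m + 1) = gg k l (m + 1) ^ l (m + 1) := by
    simpa using gg_sub_one_zpow_eq k l (m + 1)
  rw [hrel] at hpow
  exact hC.mem_of_zpow_mem (gg_mem_Ptil k l hk (m + 1))
    (gg_mem_Gsub k l (by omega) le_rfl) (hl (m + 1)) hpow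
end
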